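/- arXiv:1610.03986 — 4 statements merged into one kernel-verified Lean document; each statement's English description precedes it below -/
import Mathlib

section
/- Every point γ(s) on the curve defined by the continued-fraction recursion is an equilibrium of the RFM with pool: f(γ(s)) = 0 for all s in the domain of γ. -/
/-!
Each component of the RFM with pool is an inflow minus an outflow, the flows being
`λ x₀ (1 - x₁)`, `λ_c xᵢ (1 - xᵢ₊₁)` and `λ_c xₙ`. The recursion defining `γ` says exactly
that all of these flows equal `λ_c s` at `γ(s)`, so every component vanishes.
-/

/-- The ribosome flow model with pool: vector field on `ℝ^{n+1}`. -/
def rfm (n : ℕ) (l lc : ℝ) (x : Fin (n + 1) → ℝ) : Fin (n + 1) → ℝ :=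
  fun i =>
    let g : ℕ → ℝ := fun k => if h : k < n + 1 then x ⟨k, h⟩ else 0
    if i.val = 0 then -l * g 0 * (1 - g 1) + lc * g n
    else if i.val = 1 then l * g 0 * (1 - g 1) - lc * g 1 * (1 - g 2)
    else if i.val = n then lc * g (n - 1) * (1 - g n) - lc * g n
    else lc * g (i.val - 1) * (1 - g i.val) - lc * g i.val * (1 - g (i.val + 1))

theorem rfm_eq_zero_of_const_flux {n : ℕ} (hn : 2 ≤ n) {l lc J : ℝ} {x : ℕ → ℝ}
    (h_in : l * x 0 * (1 - x 1) = J)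
    (h_chain : ∀ i, 1 ≤ i → i ≤ n - 1 → lc * x i * (1 - x (i + 1)) = J)
    (h_out : lc * x n = J) :
    rfm n l lc (fun i => x i) = 0 := by
  funext ⟨i, hi⟩
  obtain rfl | rfl | hi_eq | ⟨hi₁, hi₂⟩ : i = 0 ∨ i = 1 ∨ i = n ∨ 2 ≤ i ∧ i ≤ n - 1 := by
    omega
  · simp (disch := omega) only [rfm, Pi.zero_apply, dif_pos, if_true]
    linarith
  · simp (disch := omega) only [rfm, Pi.zero_apply, dif_pos, if_neg, if_true]
    linarith [h_chain 1 le_rfl (by omega)]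
  · simp (disch := omega) only [rfm, Pi.zero_apply, dif_pos, if_pos, if_neg]
    have h_last := h_chain (n - 1) (by omega) le_rfl
    rw [Nat.sub_add_cancel (by omega)] at h_last
    linarith
  · simp (disch := omega) only [rfm, Pi.zero_apply, dif_pos, if_neg]
    have h_prev := h_chain (i - 1) (by omega) (by omega)
    rw [Nat.sub_add_cancel (by omega)] at h_prev
    linarith [h_chain i (by omega) hi₂]

theorem rfm_equilibrium_general (n : ℕ) (hn : 2 ≤ n) (l lc : ℝ)
    (hl : 0 < l) (a b : ℝ)
    (γ : ℕ → ℝ → ℝ)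
    (hγn : ∀ s ∈ Set.Ioo a b, γ n s = s)
    (hrec : ∀ i, 1 ≤ i → i ≤ n - 1 → ∀ s ∈ Set.Ioo a b,
      γ i s = s / (1 - γ (i + 1) s))
    (hγ0 : ∀ s ∈ Set.Ioo a b, γ 0 s = lc * s / (l * (1 - γ 1 s)))
    (hlt : ∀ i, 1 ≤ i → i ≤ n → ∀ s ∈ Set.Ioo a b, γ i s < 1) :
    ∀ s ∈ Set.Ioo a b, rfm n l lc (fun i => γ i.val s) = 0 := by
  intro s hs
  have h_vacancy : ∀ i, 1 ≤ i → i ≤ n → 1 - γ i s ≠ 0 := fun i h₁ h₂ =>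
    (sub_pos.2 (hlt i h₁ h₂ s hs)).ne'
  apply rfm_eq_zero_of_const_flux (x := fun k => γ k s) hn (J := lc * s)
  · rw [hγ0 s hs]
    field_simp [hl.ne', h_vacancy 1 le_rfl (by omega)]
  · intro i h₁ h₂
    rw [hrec i h₁ h₂ s hs, mul_assoc,
      div_mul_cancel₀ _ (h_vacancy (i + 1) (by omega) (by omega))]
  · rw [hγn s hs]

/-- Every point `γ(s)` of the continued-fraction curve is an equilibrium of
the RFM with pool: `f (γ s) = 0`. -/
theorem rfm_equilibrium (n : ℕ) (hn : 2 ≤ n) (l lc : ℝ)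
    (hl : 0 < l) (hlc : 0 < lc) (a b : ℝ) (hab : a < b)
    (γ : ℕ → ℝ → ℝ)
    (hγn : ∀ s ∈ Set.Ioo a b, γ n s = s)
    (hrec : ∀ i, 1 ≤ i → i ≤ n - 1 → ∀ s ∈ Set.Ioo a b,
      γ i s = s / (1 - γ (i + 1) s))
    (hγ0 : ∀ s ∈ Set.Ioo a b, γ 0 s = lc * s / (l * (1 - γ 1 s)))
    (hlt : ∀ i, 1 ≤ i → i ≤ n → ∀ s ∈ Set.Ioo a b, γ i s < 1) :
    ∀ s ∈ Set.Ioo a b, rfm n l lc (fun i => γ i.val s) = 0 :=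
  rfm_equilibrium_general n hn l lc hl a b γ hγn hrec hγ0 hlt
end

section
/- Each column of the Jacobian J_f(x) of the RFM-with-pool vector field, evaluated at any equilibrium point γ(s) with γ_i(s) ∈ (0,1) for i ≥ 1 and γ_0(s) > 0, has strictly negative diagonal entry, nonnegative off-diagonal entries, and column sum equal to zero; hence by Gershgorin's theorem every eigenvalue of J_f(γ(s)) has real part ≤ 0. -/
/-- The Jacobian matrix of the RFM-with-pool vector field. -/
noncomputable def rfmJac (n : ℕ) (l lc : ℝ) (p : Fin (n + 1) → ℝ) :
    Matrix (Fin (n + 1)) (Fin (n + 1)) ℝ :=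
  Matrix.of fun k i => fderiv ℝ (fun x => rfm n l lc x k) p (Pi.single i 1)

/-! The RFM with pool is a ring of `n + 1` sites, the pool being site `0`: site `j` sends the flux
`F_j = r_j x_j (1 - c_j x_{j+1})` to site `j + 1` (indices mod `n + 1`), and `f_k = F_{k-1} - F_k`.
Conservation of mass makes every column sum of the Jacobian vanish, and since `F_j` increases in
`x_j` and decreases in `x_{j+1}`, the off-diagonal entries are nonnegative and the diagonal is
negative. Gershgorin's theorem for the transpose then puts each eigenvalue in a disc
`|μ - J_kk| ≤ -J_kk`, which lies in the closed left half-plane. -/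

open Finset

namespace Matrix

variable {K ι : Type*} [Fintype ι] [DecidableEq ι]

theorem hasEigenvalue_toLin'_transpose_iff [Field K] {A : Matrix ι ι K} {μ : K} :
    Module.End.HasEigenvalue (toLin' Aᵀ) μ ↔ Module.End.HasEigenvalue (toLin' A) μ := by
  simp only [Module.End.hasEigenvalue_iff_mem_spectrum, spectrum_toLin',
    mem_spectrum_iff_isRoot_charpoly, charpoly_transpose]

theorem eigenvalue_mem_ball_col [NormedField K] {A : Matrix ι ι K} {μ : K}
    (hμ : Module.End.HasEigenvalue (toLin' A) μ) :
    ∃ k, μ ∈ Metric.closedBall (A k k) (∑ i ∈ univ.erase k, ‖A i k‖) :=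
  eigenvalue_mem_ball (hasEigenvalue_toLin'_transpose_iff.2 hμ)

theorem re_le_zero_of_hasEigenvalue_of_sum_col_eq_zero {A : Matrix ι ι ℝ}
    (hoff : ∀ k i, k ≠ i → 0 ≤ A k i) (hcol : ∀ i, ∑ k, A k i = 0) {μ : ℂ}
    (hμ : Module.End.HasEigenvalue (toLin' (A.map ((↑) : ℝ → ℂ))) μ) : μ.re ≤ 0 := by
  obtain ⟨k, hk⟩ := eigenvalue_mem_ball_col hμ
  have hradius : ∑ i ∈ univ.erase k, ‖(A i k : ℂ)‖ = -A k k := by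
    rw [eq_neg_iff_add_eq_zero, ← hcol k, ← add_sum_erase _ _ (mem_univ k), add_comm]
    refine congrArg₂ _ rfl (sum_congr rfl fun i hi => ?_)
    rw [Complex.norm_real, Real.norm_of_nonneg (hoff i k (ne_of_mem_erase hi))]
  rw [Metric.mem_closedBall, dist_eq_norm] at hk
  simp only [map_apply, hradius] at hk
  have hre := Complex.re_le_norm (μ - A k k)
  rw [Complex.sub_re, Complex.ofReal_re] at hre
  linarith

end Matrix

section RingFlow

variable {n : ℕ} (r c : Fin (n + 1) → ℝ)

def ringFlux (j : Fin (n + 1)) (x : Fin (n + 1) → ℝ) : ℝ :=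
  r j * x j * (1 - c j * x (j + 1))

def ringFluxPartial (p : Fin (n + 1) → ℝ) (j i : Fin (n + 1)) : ℝ :=
  r j * ((if j = i then 1 - c j * p (j + 1) else 0) - if j + 1 = i then c j * p j else 0)

def ringJac (p : Fin (n + 1) → ℝ) : Matrix (Fin (n + 1)) (Fin (n + 1)) ℝ :=
  Matrix.of fun k i => ringFluxPartial r c p (k - 1) i - ringFluxPartial r c p k i

theorem hasFDerivAt_ringFlux (j : Fin (n + 1)) (p : Fin (n + 1) → ℝ) :
    HasFDerivAt (ringFlux r c j)
      (r j • ((1 - c j * p (j + 1)) • ContinuousLinearMap.proj (R := ℝ) (φ := fun _ => ℝ) j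
        - (c j * p j) • ContinuousLinearMap.proj (R := ℝ) (j + 1))) p := by
  have hx := fun i : Fin (n + 1) => hasFDerivAt_apply (𝕜 := ℝ) i p
  have := (((hx j).const_mul (r j)).mul (((hx (j + 1)).const_mul (c j)).const_sub 1))
  refine this.congr_fderiv ?_
  ext v
  simp only [smul_neg, add_apply, neg_apply, smul_apply,
    ContinuousLinearMap.proj_apply, smul_eq_mul, sub_apply]
  ring

theorem fderiv_ringFlux_single (p : Fin (n + 1) → ℝ) (j i : Fin (n + 1)) :
    fderiv ℝ (ringFlux r c j) p (Pi.single i 1) = ringFluxPartial r c p j i := by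
  rw [(hasFDerivAt_ringFlux r c j p).fderiv, ringFluxPartial]
  simp [Pi.single_apply]

theorem sum_ringJac_col (p : Fin (n + 1) → ℝ) (i : Fin (n + 1)) :
    ∑ k, ringJac r c p k i = 0 := by
  simp only [ringJac, Matrix.of_apply, sum_sub_distrib, sub_eq_zero]
  exact Fintype.sum_equiv (Equiv.subRight 1) _ _ fun _ => rfl

variable {r c}

theorem ringJac_nonneg_of_ne {p : Fin (n + 1) → ℝ} (hr : ∀ j, 0 ≤ r j) (hc : ∀ j, 0 ≤ c j)
    (hp : ∀ j, 0 ≤ p j) (hcp : ∀ j, c j * p (j + 1) ≤ 1) {k i : Fin (n + 1)} (hki : k ≠ i) :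
    0 ≤ ringJac r c p k i := by
  have hin : 0 ≤ ringFluxPartial r c p (k - 1) i := by
    rw [ringFluxPartial, sub_add_cancel, if_neg hki, sub_zero]
    split_ifs
    · exact mul_nonneg (hr _) (sub_nonneg.2 (by simpa using hcp (k - 1)))
    · exact mul_nonneg (hr _) le_rfl
  have hout : ringFluxPartial r c p k i ≤ 0 := by
    rw [ringFluxPartial, if_neg hki, zero_sub]
    split_ifs
    · exact mul_nonpos_of_nonneg_of_nonpos (hr _) (neg_nonpos.2 (mul_nonneg (hc _) (hp _)))
    · simp
  simp only [ringJac, Matrix.of_apply]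
  linarith

theorem ringJac_diag_neg {p : Fin (n + 1) → ℝ} (hn : n ≠ 0) (hr : ∀ j, 0 < r j)
    (hc : ∀ j, 0 ≤ c j) (hp : ∀ j, 0 ≤ p j) (hcp : ∀ j, c j * p (j + 1) < 1) (k : Fin (n + 1)) :
    ringJac r c p k k < 0 := by
  have hne : k + 1 ≠ k := by simpa [Fin.one_eq_zero_iff] using hn
  have hin : ringFluxPartial r c p (k - 1) k ≤ 0 := by
    rw [ringFluxPartial, sub_add_cancel, if_neg (by simpa [sub_eq_iff_eq_add] using hne.symm),
      if_pos rfl, zero_sub]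
    exact mul_nonpos_of_nonneg_of_nonpos (hr _).le (neg_nonpos.2 (mul_nonneg (hc _) (hp _)))
  have hout : 0 < ringFluxPartial r c p k k := by
    rw [ringFluxPartial, if_pos rfl, if_neg hne, sub_zero]
    exact mul_pos (hr _) (sub_pos.2 (hcp _))
  simp only [ringJac, Matrix.of_apply]
  linarith

end RingFlow

def rfmRate (n : ℕ) (l lc : ℝ) (j : Fin (n + 1)) : ℝ := if j = 0 then l else lc

/-- The exit flux `lc * x n` into the pool is not blocked by the pool's occupancy. -/
def rfmBlocking (n : ℕ) (j : Fin (n + 1)) : ℝ := if j = Fin.last n then 0 else 1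

theorem rfm_eq_ringFlux_sub {n : ℕ} (hn : 2 ≤ n) (l lc : ℝ) (x : Fin (n + 1) → ℝ)
    (k : Fin (n + 1)) :
    rfm n l lc x k = ringFlux (rfmRate n l lc) (rfmBlocking n) (k - 1) x
      - ringFlux (rfmRate n l lc) (rfmBlocking n) k x := by
  obtain ⟨g, rfl⟩ : ∃ g : ℕ → ℝ, x = fun j : Fin (n + 1) => g j :=
    ⟨fun k => if h : k < n + 1 then x ⟨k, h⟩ else 0, funext fun j => by simp [j.isLt]⟩
  obtain ⟨k, hk⟩ := k
  simp only [rfm, ringFlux, rfmRate, rfmBlocking, Fin.ext_iff, Fin.coe_sub_one, Fin.val_add_one,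
    Fin.val_last, Fin.val_zero, sub_add_cancel]
  split_ifs <;> first | omega | (subst_vars; ring)

theorem rfmJac_eq_ringJac {n : ℕ} (hn : 2 ≤ n) (l lc : ℝ) (p : Fin (n + 1) → ℝ) :
    rfmJac n l lc p = ringJac (rfmRate n l lc) (rfmBlocking n) p := by
  ext k i
  have hF := fun j => (hasFDerivAt_ringFlux (rfmRate n l lc) (rfmBlocking n) j p).differentiableAt
  rw [rfmJac, Matrix.of_apply, funext fun x => rfm_eq_ringFlux_sub hn l lc x k,
    fderiv_fun_sub (hF _) (hF _), sub_apply, fderiv_ringFlux_single, fderiv_ringFlux_single]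
  rfl

theorem rfmRate_pos {n : ℕ} {l lc : ℝ} (hl : 0 < l) (hlc : 0 < lc) (j : Fin (n + 1)) :
    0 < rfmRate n l lc j := by
  unfold rfmRate
  split_ifs <;> assumption

theorem rfmBlocking_nonneg {n : ℕ} (j : Fin (n + 1)) : 0 ≤ rfmBlocking n j := by
  unfold rfmBlocking
  split_ifs <;> norm_num

theorem rfmBlocking_mul_lt_one {n : ℕ} {p : Fin (n + 1) → ℝ} (hp : ∀ j, j ≠ 0 → p j < 1)
    (j : Fin (n + 1)) : rfmBlocking n j * p (j + 1) < 1 := by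
  unfold rfmBlocking
  split_ifs with hj
  · simp
  · rw [one_mul]
    refine hp _ ?_
    rw [Ne, Fin.ext_iff, Fin.val_add_one, if_neg hj]
    simp

theorem jacobian_gershgorin_general (n : ℕ) (hn : 2 ≤ n) (l lc : ℝ)
    (hl : 0 < l) (hlc : 0 < lc)
    (γ : ℕ → ℝ)
    (hγ0pos : 0 < γ 0)
    (hmem : ∀ i, 1 ≤ i → i ≤ n → γ i ∈ Set.Ioo (0 : ℝ) 1) :
    (∀ i, rfmJac n l lc (fun i => γ i.val) i i < 0) ∧
    (∀ k i, k ≠ i → 0 ≤ rfmJac n l lc (fun i => γ i.val) k i) ∧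
    (∀ i, ∑ k, rfmJac n l lc (fun i => γ i.val) k i = 0) ∧
    (∀ μ : ℂ, Module.End.HasEigenvalue
        (Matrix.toLin' ((rfmJac n l lc (fun i => γ i.val)).map
          (fun a => (a : ℂ)))) μ → μ.re ≤ 0) := by
  have hp : ∀ j : Fin (n + 1), 0 ≤ γ j := fun j => by
    rcases Nat.eq_zero_or_pos j with h | h
    · exact h ▸ hγ0pos.le
    · exact (hmem j h (Nat.lt_succ_iff.1 j.isLt)).1.le
  have hlt_one : ∀ j : Fin (n + 1), j ≠ 0 → γ j < 1 := fun j hj =>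
    (hmem j (Nat.one_le_iff_ne_zero.2 (Fin.val_ne_zero_iff.2 hj)) (Nat.lt_succ_iff.1 j.isLt)).2
  have hr := rfmRate_pos (n := n) hl hlc
  have hcp := rfmBlocking_mul_lt_one hlt_one
  have hoff : ∀ k i, k ≠ i →
      0 ≤ ringJac (rfmRate n l lc) (rfmBlocking n) (fun i => γ i.val) k i :=
    fun _ _ => ringJac_nonneg_of_ne (fun j => (hr j).le) rfmBlocking_nonneg hp (fun j => (hcp j).le)
  have hcol := sum_ringJac_col (rfmRate n l lc) (rfmBlocking n) (fun i => γ i.val)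
  rw [rfmJac_eq_ringJac hn]
  exact ⟨ringJac_diag_neg (by omega) hr rfmBlocking_nonneg hp hcp, hoff, hcol,
    fun _ => Matrix.re_le_zero_of_hasEigenvalue_of_sum_col_eq_zero hoff hcol⟩

/-- At an interior equilibrium `γ(s)` of the RFM with pool, each column of the
Jacobian has strictly negative diagonal entry, nonnegative off-diagonal
entries, and zero column sum; hence (Gershgorin) every complex eigenvalue has
real part `≤ 0`. -/
theorem jacobian_gershgorin (n : ℕ) (hn : 2 ≤ n) (l lc : ℝ)
    (hl : 0 < l) (hlc : 0 < lc) (s : ℝ) (hs : 0 < s)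
    (γ : ℕ → ℝ)
    (hγ0pos : 0 < γ 0)
    (hmem : ∀ i, 1 ≤ i → i ≤ n → γ i ∈ Set.Ioo (0 : ℝ) 1)
    (hγn : γ n = s)
    (heq : ∀ i, 1 ≤ i → i ≤ n - 1 → γ i * (1 - γ (i + 1)) = s)
    (heq0 : l * γ 0 * (1 - γ 1) = lc * s) :
    (∀ i, rfmJac n l lc (fun i => γ i.val) i i < 0) ∧
    (∀ k i, k ≠ i → 0 ≤ rfmJac n l lc (fun i => γ i.val) k i) ∧
    (∀ i, ∑ k, rfmJac n l lc (fun i => γ i.val) k i = 0) ∧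
    (∀ μ : ℂ, Module.End.HasEigenvalue
        (Matrix.toLin' ((rfmJac n l lc (fun i => γ i.val)).map
          (fun a => (a : ℂ)))) μ → μ.re ≤ 0) :=
  jacobian_gershgorin_general n hn l lc hl hlc γ hγ0pos hmem
end

section
/- The Jacobian J = J_f(γ(s)) of the RFM with pool at an equilibrium admits the factorization J = L U, where L is the lower bidiagonal matrix with 1's on the diagonal and -1's on the subdiagonal, and U is an upper triangular matrix whose diagonal entries are -λ(1-γ_1), -λ_c(1-γ_2), ..., -λ_c(1-γ_n), 0; in particular det J = 0 and the leading n×n principal minor of U is nonzero when γ_i < 1 for all i. -/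
/-- Lower bidiagonal matrix with `1` on the diagonal and `-1` below it. -/
def Lmat (n : ℕ) : Matrix (Fin (n + 1)) (Fin (n + 1)) ℝ :=
  Matrix.of fun k i =>
    if k = i then 1 else if (k : ℕ) = (i : ℕ) + 1 then -1 else 0

/-! Write `R_k` for the flux from site `k` to site `k + 1` (the pool is site `0`, and `R_n` is the
flow from site `n` back into the pool), so that `f_k = R_{k-1} - R_k` cyclically. Since `L⁻¹` is
the lower triangular matrix of ones, `U = L⁻¹ J` has as row `k` the gradient of the partial sum
`f_0 + ⋯ + f_k = R_n - R_k`. Each `R_k` depends only on `x_k` and `x_{k+1}` (and `R_n` only on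
`x_n`), so `U` is upper triangular with diagonal `-∂R_k/∂x_k`, and its last row vanishes because
the total occupancy is conserved. -/

theorem fderiv_const_mul_coord_mul_one_sub_apply_single {ι : Type*} [Fintype ι] [DecidableEq ι]
    (c : ℝ) (a b i : ι) (p : ι → ℝ) :
    fderiv ℝ (fun x : ι → ℝ => c * x a * (1 - x b)) p (Pi.single i 1) =
      c * (Pi.single i 1 : ι → ℝ) a * (1 - p b)
        - c * p a * (Pi.single i 1 : ι → ℝ) b := by
  rw [(((hasFDerivAt_apply a p).const_mul c).fun_mul ((hasFDerivAt_apply b p).const_sub 1)).fderiv]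
  simp
  ring

theorem fderiv_const_mul_coord_apply_single {ι : Type*} [Fintype ι] [DecidableEq ι] (c : ℝ)
    (a i : ι) (p : ι → ℝ) :
    fderiv ℝ (fun x : ι → ℝ => c * x a) p (Pi.single i 1) =
      c * (Pi.single i 1 : ι → ℝ) a := by
  rw [((hasFDerivAt_apply a p).const_mul c).fderiv]
  simp

/-- `R_k`; every `k ≥ n` gives `R_n`. -/
def flux (n : ℕ) (l lc : ℝ) (x : Fin (n + 1) → ℝ) (k : ℕ) : ℝ :=
  if hk : k < n then (if k = 0 then l else lc) * x ⟨k, by omega⟩ * (1 - x ⟨k + 1, by omega⟩)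
  else lc * x (Fin.last n)

theorem rfm_zero {n : ℕ} (hn : 2 ≤ n) (l lc : ℝ) (x : Fin (n + 1) → ℝ) :
    rfm n l lc x 0 = flux n l lc x n - flux n l lc x 0 := by
  simp [rfm, flux, show 0 < n by omega, Fin.last]
  ring

theorem rfm_succ {n : ℕ} (hn : 2 ≤ n) (l lc : ℝ) (x : Fin (n + 1) → ℝ) (j : Fin n) :
    rfm n l lc x j.succ = flux n l lc x j - flux n l lc x (j + 1) := by
  obtain ⟨j, hj⟩ := j
  rcases Nat.eq_zero_or_pos j with rfl | hj0
  · simp [rfm, flux, hj, hn, show 1 < n by omega]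
  rcases eq_or_ne (j + 1) n with rfl | hjn
  · simp [rfm, flux, hj0.ne', Fin.last]
  · simp [rfm, flux, hj0.ne', hjn, hj, hj.le, show j + 1 < n by omega]

theorem Lmat_mul_apply_zero {n : ℕ} (M : Matrix (Fin (n + 1)) (Fin (n + 1)) ℝ)
    (i : Fin (n + 1)) :
    (Lmat n * M) 0 i = M 0 i := by
  have hrow : Lmat n 0 = Pi.single 0 1 := by
    ext x
    simp [Lmat, Pi.single_apply, eq_comm]
  rw [Matrix.mul_apply, hrow]
  simp [Pi.single_apply]

theorem Lmat_mul_apply_succ {n : ℕ} (M : Matrix (Fin (n + 1)) (Fin (n + 1)) ℝ) (j : Fin n)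
    (i : Fin (n + 1)) :
    (Lmat n * M) j.succ i = M j.succ i - M j.castSucc i := by
  have hrow : Lmat n j.succ = Pi.single j.succ 1 - Pi.single j.castSucc 1 := by
    ext x
    simp only [Lmat, Matrix.of_apply, Pi.sub_apply, Pi.single_apply, Fin.ext_iff,
      Fin.val_succ, Fin.val_castSucc]
    split_ifs <;> first | omega | norm_num
  rw [Matrix.mul_apply, hrow]
  simp [sub_mul, Finset.sum_sub_distrib, Pi.single_apply]

theorem differentiable_flux (n : ℕ) (l lc : ℝ) (k : ℕ) :
    Differentiable ℝ (fun x => flux n l lc x k) := by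
  by_cases hk : k < n
  · simp only [flux, dif_pos hk]
    fun_prop
  · simp only [flux, dif_neg hk]
    fun_prop

noncomputable def fluxJac (n : ℕ) (l lc : ℝ) (p : Fin (n + 1) → ℝ) (k : ℕ)
    (i : Fin (n + 1)) : ℝ :=
  fderiv ℝ (fun x => flux n l lc x k) p (Pi.single i 1)

theorem fluxJac_of_lt {n : ℕ} (l lc : ℝ) (p : Fin (n + 1) → ℝ) {k : ℕ} (hk : k ≤ n)
    {i : Fin (n + 1)} (hik : (i : ℕ) < k) : fluxJac n l lc p k i = 0 := by
  unfold fluxJac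
  by_cases hkn : k < n
  · simp only [flux, dif_pos hkn, fderiv_const_mul_coord_mul_one_sub_apply_single]
    rw [Pi.single_eq_of_ne, Pi.single_eq_of_ne] <;> simp [Fin.ext_iff] <;> omega
  · simp only [flux, dif_neg hkn, fderiv_const_mul_coord_apply_single]
    rw [Pi.single_eq_of_ne, mul_zero]
    simp [Fin.ext_iff]
    omega

theorem fluxJac_self {n : ℕ} (l lc : ℝ) (p : Fin (n + 1) → ℝ) {i : Fin (n + 1)}
    (hi : (i : ℕ) < n) :
    fluxJac n l lc p i i = (if (i : ℕ) = 0 then l else lc) * (1 - p ⟨i + 1, by omega⟩) := by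
  unfold fluxJac
  simp only [flux, dif_pos hi, fderiv_const_mul_coord_mul_one_sub_apply_single]
  have hne : (⟨i + 1, by omega⟩ : Fin (n + 1)) ≠ i := by simp [Fin.ext_iff]
  simp only [Pi.single_eq_same, Pi.single_eq_of_ne hne]
  ring

theorem rfmJac_zero {n : ℕ} (hn : 2 ≤ n) (l lc : ℝ) (p : Fin (n + 1) → ℝ)
    (i : Fin (n + 1)) :
    rfmJac n l lc p 0 i = fluxJac n l lc p n i - fluxJac n l lc p 0 i := by
  simp only [rfmJac, fluxJac, Matrix.of_apply, rfm_zero hn]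
  rw [fderiv_fun_sub (differentiable_flux n l lc n p) (differentiable_flux n l lc 0 p)]
  rfl

theorem rfmJac_succ {n : ℕ} (hn : 2 ≤ n) (l lc : ℝ) (p : Fin (n + 1) → ℝ) (j : Fin n)
    (i : Fin (n + 1)) :
    rfmJac n l lc p j.succ i = fluxJac n l lc p j i - fluxJac n l lc p (j + 1) i := by
  simp only [rfmJac, fluxJac, Matrix.of_apply, rfm_succ hn]
  rw [fderiv_fun_sub (differentiable_flux n l lc _ p) (differentiable_flux n l lc _ p)]
  rfl

noncomputable def rfmU (n : ℕ) (l lc : ℝ) (p : Fin (n + 1) → ℝ) :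
    Matrix (Fin (n + 1)) (Fin (n + 1)) ℝ :=
  Matrix.of fun k i => fluxJac n l lc p n i - fluxJac n l lc p k i

theorem rfmU_isUpperTriangular {n : ℕ} (l lc : ℝ) (p : Fin (n + 1) → ℝ) :
    (rfmU n l lc p).IsUpperTriangular := by
  intro k i (hik : (i : ℕ) < k)
  simp only [rfmU, Matrix.of_apply, fluxJac_of_lt l lc p le_rfl (hik.trans_le k.is_le),
    fluxJac_of_lt l lc p k.is_le hik, sub_zero]

theorem rfmU_last {n : ℕ} (l lc : ℝ) (p : Fin (n + 1) → ℝ) (i : Fin (n + 1)) :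
    rfmU n l lc p (Fin.last n) i = 0 :=
  sub_self _

theorem rfmU_diag_of_lt {n : ℕ} (l lc : ℝ) (p : Fin (n + 1) → ℝ) {i : Fin (n + 1)}
    (hi : (i : ℕ) < n) :
    rfmU n l lc p i i = -(if (i : ℕ) = 0 then l else lc) * (1 - p ⟨i + 1, by omega⟩) := by
  simp only [rfmU, Matrix.of_apply, fluxJac_of_lt l lc p le_rfl hi, fluxJac_self l lc p hi]
  ring

theorem Lmat_mul_rfmU {n : ℕ} (hn : 2 ≤ n) (l lc : ℝ) (p : Fin (n + 1) → ℝ) :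
    Lmat n * rfmU n l lc p = rfmJac n l lc p := by
  ext k i
  cases k using Fin.cases with
  | zero => simp [Lmat_mul_apply_zero, rfmJac_zero hn, rfmU]
  | succ j =>
    simp only [Lmat_mul_apply_succ, rfmJac_succ hn, rfmU, Matrix.of_apply, Fin.val_succ,
      Fin.val_castSucc]
    ring

theorem jacobian_LU_general (n : ℕ) (hn : 2 ≤ n) (l lc : ℝ)
    (hl : 0 < l) (hlc : 0 < lc)
    (γ : ℕ → ℝ)
    (hmem : ∀ i, 1 ≤ i → i ≤ n → γ i ∈ Set.Ioo (0 : ℝ) 1) :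
    ∃ U : Matrix (Fin (n + 1)) (Fin (n + 1)) ℝ,
      (∀ k i : Fin (n + 1), (i : ℕ) < (k : ℕ) → U k i = 0) ∧
      (∀ i : Fin (n + 1), U i i =
        if (i : ℕ) = 0 then -l * (1 - γ 1)
        else if (i : ℕ) = n then 0
        else -lc * (1 - γ ((i : ℕ) + 1))) ∧
      rfmJac n l lc (fun i => γ i.val) = Lmat n * U ∧
      (rfmJac n l lc (fun i => γ i.val)).det = 0 ∧
      (∀ i : Fin (n + 1), (i : ℕ) < n → U i i ≠ 0) := by
  set p : Fin (n + 1) → ℝ := fun i => γ i.val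
  refine ⟨rfmU n l lc p, fun _ _ hik => rfmU_isUpperTriangular l lc p hik, fun i => ?_,
    (Lmat_mul_rfmU hn l lc p).symm, ?_, fun i hi => ?_⟩
  · rcases i.is_le.lt_or_eq with hi | hi
    · rw [rfmU_diag_of_lt l lc p hi, if_neg hi.ne]
      split_ifs with h0 <;> simp [p, h0]
    · obtain rfl : i = Fin.last n := Fin.ext hi
      simp [rfmU_last, show n ≠ 0 by omega]
  · rw [← Lmat_mul_rfmU hn, Matrix.det_mul,
      Matrix.det_of_isUpperTriangular (rfmU_isUpperTriangular l lc p)]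
    exact mul_eq_zero_of_right _
      (Finset.prod_eq_zero (Finset.mem_univ (Fin.last n)) (rfmU_last l lc p _))
  · rw [rfmU_diag_of_lt l lc p hi]
    have hγ_lt_one : γ ((i : ℕ) + 1) < 1 := (hmem _ (by omega) (by omega)).2
    refine mul_ne_zero (neg_ne_zero.mpr ?_) (sub_ne_zero.mpr hγ_lt_one.ne')
    split_ifs
    exacts [hl.ne', hlc.ne']

/-- LU factorization of the Jacobian at an equilibrium: `J_f(γ) = L U` with
`U` upper triangular with diagonal `(-λ(1-γ₁), -λ_c(1-γ₂), …, -λ_c(1-γ_n), 0)`;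
in particular `det J = 0` and the first `n` diagonal entries of `U` are
nonzero. -/
theorem jacobian_LU (n : ℕ) (hn : 2 ≤ n) (l lc : ℝ)
    (hl : 0 < l) (hlc : 0 < lc) (s : ℝ) (hs : 0 < s)
    (γ : ℕ → ℝ)
    (hγ0pos : 0 < γ 0)
    (hmem : ∀ i, 1 ≤ i → i ≤ n → γ i ∈ Set.Ioo (0 : ℝ) 1)
    (hγn : γ n = s)
    (heq : ∀ i, 1 ≤ i → i ≤ n - 1 → γ i * (1 - γ (i + 1)) = s)
    (heq0 : l * γ 0 * (1 - γ 1) = lc * s) :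
    ∃ U : Matrix (Fin (n + 1)) (Fin (n + 1)) ℝ,
      (∀ k i : Fin (n + 1), (i : ℕ) < (k : ℕ) → U k i = 0) ∧
      (∀ i : Fin (n + 1), U i i =
        if (i : ℕ) = 0 then -l * (1 - γ 1)
        else if (i : ℕ) = n then 0
        else -lc * (1 - γ ((i : ℕ) + 1))) ∧
      rfmJac n l lc (fun i => γ i.val) = Lmat n * U ∧
      (rfmJac n l lc (fun i => γ i.val)).det = 0 ∧
      (∀ i : Fin (n + 1), (i : ℕ) < n → U i i ≠ 0) :=
  jacobian_LU_general n hn l lc hl hlc γ hmem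
end

section
/- The curve of equilibria γ intersects each affine hyperplane S_p = {x ∈ ℝ^{n+1} : ∑_i x_i = p} transversely: the tangent vector γ'(s) satisfies ⟨γ'(s), 𝟙⟩ > 0 for all s in the domain, where 𝟙 is the all-ones vector. Moreover, for each p in the range of s ↦ ∑_i γ_i(s), the intersection of the curve with S_p consists of exactly one point. -/
/-! Each `γᵢ` has the form `c s / (1 - γᵢ₊₁(s))` with `c > 0` (`c = λ_c / λ` for `i = 0`), and
`x ↦ c x / (1 - f x)` has derivative `c (1 - f x + x f'(x)) / (1 - f x)²`, which is positive
when `c > 0`, `x ≥ 0`, `f' ≥ 0` and `f < 1`. Downward induction from `γₙ(s) = s` therefore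
makes every `γᵢ'` positive, so `∑ᵢ γᵢ` has positive derivative and is strictly increasing. -/

open Set Filter Topology

lemma exists_pos_hasDerivAt_mul_div_one_sub {f : ℝ → ℝ} {c d x : ℝ} (hc : 0 < c) (hx : 0 ≤ x)
    (hf : HasDerivAt f d x) (hd : 0 ≤ d) (hfx : f x < 1) :
    ∃ e, 0 < e ∧ HasDerivAt (fun y => c * y / (1 - f y)) e x := by
  have hden : 0 < 1 - f x := sub_pos.mpr hfx
  refine ⟨c * (1 * (1 - f x) - x * (0 - d)) / (1 - f x) ^ 2, ?_, ?_⟩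
  · have : 0 < 1 * (1 - f x) - x * (0 - d) := by nlinarith [mul_nonneg hx hd]
    positivity
  · simpa only [mul_div_assoc] using
      ((hasDerivAt_id' x).fun_div ((hasDerivAt_const x 1).fun_sub hf) hden.ne').const_mul c

lemma gamma_exists_pos_hasDerivAt {n : ℕ} {l lc sbar : ℝ} (hl : 0 < l) (hlc : 0 < lc)
    {γ : ℕ → ℝ → ℝ}
    (hγn : ∀ s ∈ Ioo (0 : ℝ) sbar, γ n s = s)
    (hrec : ∀ i, 1 ≤ i → i ≤ n - 1 → ∀ s ∈ Ioo (0 : ℝ) sbar, γ i s = s / (1 - γ (i + 1) s))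
    (hγ0 : ∀ s ∈ Ioo (0 : ℝ) sbar, γ 0 s = lc * s / (l * (1 - γ 1 s)))
    (hmem : ∀ i, 1 ≤ i → i ≤ n → ∀ s ∈ Ioo (0 : ℝ) sbar, γ i s ∈ Ioo (0 : ℝ) 1)
    {i : ℕ} (hi : i ≤ n) : ∀ s ∈ Ioo (0 : ℝ) sbar, ∃ d, 0 < d ∧ HasDerivAt (γ i) d s := by
  have near {s : ℝ} (hs : s ∈ Ioo (0 : ℝ) sbar) {g h : ℝ → ℝ}
      (hgh : ∀ t ∈ Ioo (0 : ℝ) sbar, g t = h t) : g =ᶠ[𝓝 s] h :=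
    eventuallyEq_of_mem (isOpen_Ioo.mem_nhds hs) hgh
  induction hi using Nat.decreasingInduction with
  | self =>
    exact fun s hs => ⟨1, one_pos, (hasDerivAt_id s).congr_of_eventuallyEq (near hs hγn)⟩
  | of_succ k hk ih =>
    intro s hs
    obtain ⟨d, hd, hder⟩ := ih s hs
    have hlt : γ (k + 1) s < 1 := (hmem (k + 1) (by omega) hk s hs).2
    rcases Nat.eq_zero_or_pos k with rfl | hk0
    · obtain ⟨e, he, hder'⟩ :=
        exists_pos_hasDerivAt_mul_div_one_sub (div_pos hlc hl) hs.1.le hder hd.le hlt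
      refine ⟨e, he, hder'.congr_of_eventuallyEq (near hs fun t ht => ?_)⟩
      rw [hγ0 t ht]
      field_simp
    · obtain ⟨e, he, hder'⟩ :=
        exists_pos_hasDerivAt_mul_div_one_sub one_pos hs.1.le hder hd.le hlt
      refine ⟨e, he, hder'.congr_of_eventuallyEq (near hs fun t ht => ?_)⟩
      rw [hrec k hk0 (by omega) t ht, one_mul]

section SumOfIncreasing

variable {ι : Type*} {t : Finset ι} {f : ι → ℝ → ℝ}

lemma sum_deriv_pos_of_exists_pos_hasDerivAt (ht : t.Nonempty) {x : ℝ}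
    (hf : ∀ i ∈ t, ∃ d, 0 < d ∧ HasDerivAt (f i) d x) : 0 < ∑ i ∈ t, deriv (f i) x :=
  Finset.sum_pos (fun i hi => by
    obtain ⟨d, hd, hder⟩ := hf i hi
    rwa [hder.deriv]) ht

lemma strictMonoOn_sum_of_exists_pos_hasDerivAt (ht : t.Nonempty) {D : Set ℝ}
    (hD : Convex ℝ D) (hf : ∀ i ∈ t, ∀ x ∈ D, ∃ d, 0 < d ∧ HasDerivAt (f i) d x) :
    StrictMonoOn (fun x => ∑ i ∈ t, f i x) D := by
  have hsum {x : ℝ} (hx : x ∈ D) :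
      HasDerivAt (fun y => ∑ i ∈ t, f i y) (∑ i ∈ t, deriv (f i) x) x :=
    HasDerivAt.fun_sum fun i hi => (hf i hi x hx).choose_spec.2.differentiableAt.hasDerivAt
  refine strictMonoOn_of_deriv_pos hD (fun x hx => (hsum hx).continuousAt.continuousWithinAt)
    fun x hx => ?_
  have hxD := interior_subset hx
  rw [(hsum hxD).deriv]
  exact sum_deriv_pos_of_exists_pos_hasDerivAt ht fun i hi => hf i hi x hxD

end SumOfIncreasing

theorem gamma_transversal_general (n : ℕ) (l lc : ℝ)
    (hl : 0 < l) (hlc : 0 < lc) (sbar : ℝ)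
    (γ : ℕ → ℝ → ℝ)
    (hγn : ∀ s ∈ Set.Ioo (0 : ℝ) sbar, γ n s = s)
    (hrec : ∀ i, 1 ≤ i → i ≤ n - 1 → ∀ s ∈ Set.Ioo (0 : ℝ) sbar,
      γ i s = s / (1 - γ (i + 1) s))
    (hγ0 : ∀ s ∈ Set.Ioo (0 : ℝ) sbar,
      γ 0 s = lc * s / (l * (1 - γ 1 s)))
    (hmem : ∀ i, 1 ≤ i → i ≤ n → ∀ s ∈ Set.Ioo (0 : ℝ) sbar,
      γ i s ∈ Set.Ioo (0 : ℝ) 1) :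
    (∀ s ∈ Set.Ioo (0 : ℝ) sbar, ∃ d : ℕ → ℝ,
      (∀ i ≤ n, HasDerivAt (γ i) (d i) s) ∧
      0 < ∑ i ∈ Finset.range (n + 1), d i) ∧
    (∀ s ∈ Set.Ioo (0 : ℝ) sbar, ∀ t ∈ Set.Ioo (0 : ℝ) sbar,
      ∑ i ∈ Finset.range (n + 1), γ i s = ∑ i ∈ Finset.range (n + 1), γ i t →
      s = t) := by
  have hγ' : ∀ i ∈ Finset.range (n + 1), ∀ s ∈ Ioo (0 : ℝ) sbar,
      ∃ d, 0 < d ∧ HasDerivAt (γ i) d s := fun i hi s hs =>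
    gamma_exists_pos_hasDerivAt hl hlc hγn hrec hγ0 hmem (Finset.mem_range_succ_iff.mp hi) s hs
  refine ⟨fun s hs => ⟨fun i => deriv (γ i) s, fun i hi => ?_, ?_⟩, ?_⟩
  · exact (hγ' i (Finset.mem_range_succ_iff.mpr hi) s hs).choose_spec.2.differentiableAt.hasDerivAt
  · exact sum_deriv_pos_of_exists_pos_hasDerivAt Finset.nonempty_range_add_one
      fun i hi => hγ' i hi s hs
  · exact fun s hs t ht h =>
      (strictMonoOn_sum_of_exists_pos_hasDerivAt Finset.nonempty_range_add_one
        (convex_Ioo 0 sbar) hγ').injOn hs ht h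

/-- The curve of equilibria `γ` intersects each hyperplane
`S_p = {x : ∑ᵢ xᵢ = p}` transversely: `⟨γ'(s), 𝟙⟩ > 0`; moreover on the range
of `s ↦ ∑ᵢ γᵢ(s)` the intersection with `S_p` is a single point
(`s ↦ ∑ᵢ γᵢ(s)` is injective). -/
theorem gamma_transversal (n : ℕ) (hn : 2 ≤ n) (l lc : ℝ)
    (hl : 0 < l) (hlc : 0 < lc) (sbar : ℝ) (hsbar : 0 < sbar)
    (γ : ℕ → ℝ → ℝ)
    (hγn : ∀ s ∈ Set.Ioo (0 : ℝ) sbar, γ n s = s)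
    (hrec : ∀ i, 1 ≤ i → i ≤ n - 1 → ∀ s ∈ Set.Ioo (0 : ℝ) sbar,
      γ i s = s / (1 - γ (i + 1) s))
    (hγ0 : ∀ s ∈ Set.Ioo (0 : ℝ) sbar,
      γ 0 s = lc * s / (l * (1 - γ 1 s)))
    (hmem : ∀ i, 1 ≤ i → i ≤ n → ∀ s ∈ Set.Ioo (0 : ℝ) sbar,
      γ i s ∈ Set.Ioo (0 : ℝ) 1) :
    (∀ s ∈ Set.Ioo (0 : ℝ) sbar, ∃ d : ℕ → ℝ,
      (∀ i ≤ n, HasDerivAt (γ i) (d i) s) ∧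
      0 < ∑ i ∈ Finset.range (n + 1), d i) ∧
    (∀ s ∈ Set.Ioo (0 : ℝ) sbar, ∀ t ∈ Set.Ioo (0 : ℝ) sbar,
      ∑ i ∈ Finset.range (n + 1), γ i s = ∑ i ∈ Finset.range (n + 1), γ i t →
      s = t) :=
  gamma_transversal_general n l lc hl hlc sbar γ hγn hrec hγ0 hmem
end
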